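/- For every real k > −1, the ratio R_k(s) := I_{k+2}(s) / I_k(s) is differentiable on ℝ and satisfies the Riccati equation 2 R_k′(s) = R_k(s)² + s · R_k(s) − (k+1) for all s ∈ ℝ. -/

import Mathlib

/-!
Differentiating under the integral sign gives `∂ₛ I_k = -I_{k+2}/2`, so the quotient rule yields
`2 R_k' = R_k² - I_{k+4}/I_k`, and integration by parts, `(k+1) I_k = I_{k+4} + s I_{k+2}`,
eliminates `I_{k+4}`. Everything is justified by the bound `e^{-x⁴/4 - s x²/2} ≤ e^{s²/2+2} e^{-x}`,
which compares the integrands with those of the Gamma function.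
-/

open MeasureTheory

/-- `I k s = ∫₀^∞ x^k e^{-x⁴/4 - s x²/2} dx`. -/
noncomputable def I (k s : ℝ) : ℝ :=
  ∫ x in Set.Ioi (0 : ℝ), x ^ k * Real.exp (-x ^ 4 / 4 - s * x ^ 2 / 2)

open Real Set Filter Topology

noncomputable def quarticWeight (s x : ℝ) : ℝ := exp (-x ^ 4 / 4 - s * x ^ 2 / 2)

lemma I_eq_integral_quarticWeight (k s : ℝ) :
    I k s = ∫ x in Ioi 0, x ^ k * quarticWeight s x := rfl

lemma continuous_quarticWeight (s : ℝ) : Continuous (quarticWeight s) := by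
  unfold quarticWeight; fun_prop

lemma quarticWeight_pos (s x : ℝ) : 0 < quarticWeight s x := exp_pos _

lemma quarticWeight_le_exp_neg (s x : ℝ) :
    quarticWeight s x ≤ exp (s ^ 2 / 2 + 2) * exp (-x) := by
  rw [quarticWeight, ← exp_add]
  exact exp_le_exp.2 <| by
    nlinarith [sq_nonneg (x ^ 2 / 2 + s), sq_nonneg (x ^ 2 - 2), sq_nonneg (x - 1)]

lemma rpow_mul_quarticWeight_le (k s : ℝ) {x : ℝ} (hx : 0 ≤ x) :
    x ^ k * quarticWeight s x ≤ exp (s ^ 2 / 2 + 2) * (x ^ k * exp (-x)) := by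
  rw [mul_left_comm]
  exact mul_le_mul_of_nonneg_left (quarticWeight_le_exp_neg s x) (rpow_nonneg hx k)

lemma quarticWeight_le_of_le {s t : ℝ} (hst : s ≤ t) (x : ℝ) :
    quarticWeight t x ≤ quarticWeight s x :=
  exp_le_exp.2 (by nlinarith [sq_nonneg x])

lemma integrableOn_rpow_mul_quarticWeight {k : ℝ} (hk : -1 < k) (s : ℝ) :
    IntegrableOn (fun x => x ^ k * quarticWeight s x) (Ioi 0) := by
  refine ((GammaIntegral_convergent (by linarith : 0 < k + 1)).const_mul
    (exp (s ^ 2 / 2 + 2))).mono' ?_ ?_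
  · exact ((continuousOn_id.rpow_const fun x hx => Or.inl (ne_of_gt hx)).mul
      (continuous_quarticWeight s).continuousOn).aestronglyMeasurable measurableSet_Ioi
  · filter_upwards [ae_restrict_mem measurableSet_Ioi] with x (hx : 0 < x)
    rw [norm_of_nonneg (mul_nonneg (rpow_nonneg hx.le k) (quarticWeight_pos s x).le),
      add_sub_cancel_right, mul_comm (exp (-x))]
    exact rpow_mul_quarticWeight_le k s hx.le

lemma tendsto_rpow_mul_quarticWeight_atTop (k s : ℝ) :
    Tendsto (fun x => x ^ k * quarticWeight s x) atTop (𝓝 0) := by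
  have hexp := (tendsto_rpow_mul_exp_neg_mul_atTop_nhds_zero k 1 one_pos).const_mul
    (exp (s ^ 2 / 2 + 2))
  rw [mul_zero] at hexp
  refine squeeze_zero' ?_ ?_ hexp
  · filter_upwards [eventually_gt_atTop 0] with x hx
    exact mul_nonneg (rpow_nonneg hx.le k) (quarticWeight_pos s x).le
  · filter_upwards [eventually_gt_atTop 0] with x hx
    simpa only [neg_one_mul] using rpow_mul_quarticWeight_le k s hx.le

lemma I_pos {k : ℝ} (hk : -1 < k) (s : ℝ) : 0 < I k s := by
  have hpos : ∀ x ∈ Ioi (0 : ℝ), 0 < x ^ k * quarticWeight s x := fun x hx =>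
    mul_pos (rpow_pos_of_pos hx k) (quarticWeight_pos s x)
  have hsupport : Function.support (fun x => x ^ k * quarticWeight s x) ∩ Ioi 0 = Ioi 0 :=
    inter_eq_right.2 fun x hx => (hpos x hx).ne'
  rw [I_eq_integral_quarticWeight, setIntegral_pos_iff_support_of_nonneg_ae
    (ae_restrict_of_forall_mem measurableSet_Ioi fun x hx => (hpos x hx).le)
    (integrableOn_rpow_mul_quarticWeight hk s), hsupport]
  simp

lemma hasDerivAt_quarticWeight_left (s x : ℝ) :
    HasDerivAt (fun t => quarticWeight t x) (-(x ^ 2 / 2) * quarticWeight s x) s := by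
  have h : HasDerivAt (fun t => -x ^ 4 / 4 - t * x ^ 2 / 2) (-(x ^ 2 / 2)) s := by
    simpa using (((hasDerivAt_id s).mul_const (x ^ 2)).div_const 2).const_sub (-x ^ 4 / 4)
  exact h.exp.congr_deriv (mul_comm _ _)

lemma hasDerivAt_quarticWeight (s x : ℝ) :
    HasDerivAt (quarticWeight s) (-(x ^ 3 + s * x) * quarticWeight s x) x := by
  have h : HasDerivAt (fun y => -y ^ 4 / 4 - s * y ^ 2 / 2) (-(x ^ 3 + s * x)) x := by
    refine (((hasDerivAt_pow 4 x).neg.div_const 4).sub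
      (((hasDerivAt_pow 2 x).const_mul s).div_const 2)).congr_deriv ?_
    norm_num; ring
  exact h.exp.congr_deriv (mul_comm _ _)

lemma hasDerivAt_I {k : ℝ} (hk : -1 < k) (s : ℝ) : HasDerivAt (I k) (-I (k + 2) s / 2) s := by
  have hk2 : -1 < k + 2 := by linarith
  have key := hasDerivAt_integral_of_dominated_loc_of_deriv_le (μ := volume.restrict (Ioi 0))
    (F := fun t x => x ^ k * quarticWeight t x)
    (F' := fun t x => -(x ^ (k + 2) * quarticWeight t x) / 2)
    (bound := fun x => x ^ (k + 2) * quarticWeight (s - 1) x / 2)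
    (Ioi_mem_nhds (sub_one_lt s))
    (Eventually.of_forall fun t => (integrableOn_rpow_mul_quarticWeight hk t).aestronglyMeasurable)
    (integrableOn_rpow_mul_quarticWeight hk s)
    ((integrableOn_rpow_mul_quarticWeight hk2 s).neg.div_const 2).aestronglyMeasurable
    ?bound ((integrableOn_rpow_mul_quarticWeight hk2 (s - 1)).div_const 2) ?deriv
  · have hI := key.2
    rw [integral_div, integral_neg] at hI
    exact hI
  case bound =>
    filter_upwards [ae_restrict_mem measurableSet_Ioi] with x (hx : 0 < x) t (ht : s - 1 < t)
    have hx2 : 0 ≤ x ^ (k + 2) := rpow_nonneg hx.le _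
    rw [norm_div, norm_neg, norm_of_nonneg (mul_nonneg hx2 (quarticWeight_pos t x).le),
      Real.norm_two]
    gcongr
    exact quarticWeight_le_of_le ht.le x
  case deriv =>
    filter_upwards [ae_restrict_mem measurableSet_Ioi] with x (hx : 0 < x) t _
    refine ((hasDerivAt_quarticWeight_left t x).const_mul (x ^ k)).congr_deriv ?_
    rw [show x ^ (k + 2) = x ^ k * x ^ 2 by exact_mod_cast rpow_add_natCast hx.ne' k 2]
    ring

lemma hasDerivAt_rpow_add_one_mul_quarticWeight (k s : ℝ) {x : ℝ} (hx : 0 < x) :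
    HasDerivAt (fun y => y ^ (k + 1) * quarticWeight s y)
      ((k + 1) * (x ^ k * quarticWeight s x) - x ^ (k + 4) * quarticWeight s x
        - s * (x ^ (k + 2) * quarticWeight s x)) x := by
  have hpow (n : ℕ) : x ^ (k + n) = x ^ k * x ^ n := rpow_add_natCast hx.ne' k n
  refine ((hasDerivAt_rpow_const (p := k + 1) (Or.inl hx.ne')).mul
    (hasDerivAt_quarticWeight s x)).congr_deriv ?_
  have h1 := hpow 1
  have h2 := hpow 2
  have h4 := hpow 4
  push_cast at h1 h2 h4
  rw [add_sub_cancel_right, h1, h2, h4]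
  ring

/-- Integrate `d/dx (x^{k+1} e^{-x⁴/4 - s x²/2})` over `(0, ∞)`: the boundary term at `0`
vanishes because `k + 1 > 0`. -/
lemma I_recurrence {k : ℝ} (hk : -1 < k) (s : ℝ) :
    (k + 1) * I k s = I (k + 4) s + s * I (k + 2) s := by
  have hIk := integrableOn_rpow_mul_quarticWeight hk s
  have hIk2 := integrableOn_rpow_mul_quarticWeight (by linarith : -1 < k + 2) s
  have hIk4 := integrableOn_rpow_mul_quarticWeight (by linarith : -1 < k + 4) s
  have hcont : ContinuousWithinAt (fun y => y ^ (k + 1) * quarticWeight s y) (Ici 0) 0 :=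
    ((continuousAt_rpow_const 0 (k + 1) (Or.inr (by linarith))).mul
      (continuous_quarticWeight s).continuousAt).continuousWithinAt
  have hparts := integral_Ioi_of_hasDerivAt_of_tendsto hcont
    (fun x hx => hasDerivAt_rpow_add_one_mul_quarticWeight k s hx)
    (((hIk.const_mul (k + 1)).sub hIk4).sub (hIk2.const_mul s))
    (tendsto_rpow_mul_quarticWeight_atTop (k + 1) s)
  rw [integral_sub, integral_sub, integral_const_mul, integral_const_mul,
    zero_rpow (by linarith), zero_mul, sub_zero] at hparts
  · simp only [I_eq_integral_quarticWeight]
    linarith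
  exacts [hIk.const_mul (k + 1), hIk4, (hIk.const_mul (k + 1)).sub hIk4, hIk2.const_mul s]

/-- The ratio `R_k(s) = I_{k+2}(s)/I_k(s)` is differentiable and satisfies the Riccati
equation `2 R_k'(s) = R_k(s)² + s R_k(s) - (k+1)`. -/
theorem moment_ratio_riccati (k : ℝ) (hk : -1 < k) :
    Differentiable ℝ (fun s => I (k + 2) s / I k s) ∧
    ∀ s : ℝ, 2 * deriv (fun s => I (k + 2) s / I k s) s =
      (I (k + 2) s / I k s) ^ 2 + s * (I (k + 2) s / I k s) - (k + 1) := by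
  have hratio : ∀ s, HasDerivAt (fun s => I (k + 2) s / I k s)
      ((-I (k + 4) s / 2 * I k s - I (k + 2) s * (-I (k + 2) s / 2)) / I k s ^ 2) s := by
    intro s
    have hderiv := hasDerivAt_I (by linarith : -1 < k + 2) s
    rw [show k + 2 + 2 = k + 4 by ring] at hderiv
    exact hderiv.div (hasDerivAt_I hk s) (I_pos hk s).ne'
  refine ⟨fun s => (hratio s).differentiableAt, fun s => ?_⟩
  have hI := (I_pos hk s).ne'
  rw [(hratio s).deriv]
  field_simp
  linear_combination I k s * I_recurrence hk s
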